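/- Suppose f_{H₂}(t) ≤ (C₁/2)·(1/(C₂√t))·(√t/C₂)^{(3N-2)/2}·e^{−2√t/C₂}. Then for even N ≥ 2 and any 0 < a < b, I₁ := ∫_a^b e^{−t/L₁}(t + L₁) f_{H₂}(t) dt ≤ C₆'·√b, where C₆' = (C₁C₂/2^{(3N+2)/2})·((3N+2)/2)! + (C₁L₁/(2^{(3N-2)/2}C₂))·((3N−2)/2)!. -/

import Mathlib

open MeasureTheory Real

private lemma pow_mul_exp_neg_le (n : ℕ) {x : ℝ} (hx : 0 ≤ x) :
    x ^ n * Real.exp (-x) ≤ n.factorial := by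
  have h := Real.pow_div_factorial_le_exp x hx n
  have hfac : (0:ℝ) < n.factorial := by positivity
  rw [div_le_iff₀ hfac] at h
  calc x ^ n * Real.exp (-x) ≤ Real.exp x * n.factorial * Real.exp (-x) :=
        mul_le_mul_of_nonneg_right h (Real.exp_nonneg _)
    _ = n.factorial * (Real.exp x * Real.exp (-x)) := by ring
    _ = n.factorial := by rw [← Real.exp_add, add_neg_cancel, Real.exp_zero, mul_one]

/-- Bound on I₁ = ∫_a^b e^{−t/L₁}(t+L₁) f_{H₂}(t) dt ≤ C₆'·√b. -/
theorem I1_upper_bound (N : ℕ) (hN : 0 < N) (hNeven : Even N)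
    (C₁ C₂ L₁ : ℝ) (hC₁ : 0 < C₁) (hC₂ : 0 < C₂) (hL₁ : 0 < L₁)
    (fH₂ : ℝ → ℝ) (hf : ∀ t : ℝ, 0 < t → 0 ≤ fH₂ t ∧
      fH₂ t ≤ (C₁ / 2) * (1 / (C₂ * Real.sqrt t)) *
        (Real.sqrt t / C₂) ^ ((3 * N - 2) / 2) * Real.exp (-2 * Real.sqrt t / C₂))
    (a b : ℝ) (ha : 0 < a) (hab : a < b) :
    ∫ t in a..b, Real.exp (-t / L₁) * (t + L₁) * fH₂ t
      ≤ ((C₁ * C₂ / 2 ^ ((3 * N + 2) / 2)) * (Nat.factorial ((3 * N + 2) / 2) : ℝ)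
          + (C₁ * L₁ / (2 ^ ((3 * N - 2) / 2) * C₂)) * (Nat.factorial ((3 * N - 2) / 2) : ℝ))
        * Real.sqrt b := by
  obtain ⟨k, hk⟩ := hNeven
  set m : ℕ := (3 * N - 2) / 2 with hm
  have hM : (3 * N + 2) / 2 = m + 2 := by omega
  rw [hM]
  set K : ℝ := C₁ * C₂ * (m + 2).factorial / 2 ^ (m + 3)
      + C₁ * L₁ * m.factorial / (2 ^ (m + 1) * C₂) with hK
  have hKpos : 0 < K := by positivity
  have hRHS : ((C₁ * C₂ / 2 ^ (m + 2)) * ((m + 2).factorial : ℝ)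
      + (C₁ * L₁ / (2 ^ m * C₂)) * (m.factorial : ℝ)) = 2 * K := by
    rw [hK]; field_simp; ring
  have hb : (0:ℝ) < b := ha.trans hab
  -- pointwise bound
  have hpt : ∀ t ∈ Set.Icc a b,
      Real.exp (-t / L₁) * (t + L₁) * fH₂ t ≤ K * t ^ (-(1/2) : ℝ) := by
    intro t ht
    have htpos : 0 < t := lt_of_lt_of_le ha ht.1
    set s : ℝ := Real.sqrt t with hs
    have hspos : 0 < s := Real.sqrt_pos.mpr htpos
    have hts : t = s ^ 2 := (Real.sq_sqrt htpos.le).symm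
    have hrpow : t ^ (-(1/2) : ℝ) = s⁻¹ := by
      rw [Real.rpow_neg htpos.le, ← Real.sqrt_eq_rpow]
    set x : ℝ := 2 * s / C₂ with hx
    have hxpos : 0 < x := by positivity
    have hsx : s = C₂ * x / 2 := by rw [hx]; field_simp
    obtain ⟨hf0, hfb⟩ := hf t htpos
    rw [← hs] at hfb
    have hexparg : -2 * s / C₂ = -x := by rw [hx]; ring
    rw [hexparg] at hfb
    set A : ℝ := (s / C₂) ^ m * Real.exp (-x) with hA
    have hA0 : 0 ≤ A := by positivity
    have hAeq : (s / C₂) ^ m = x ^ m / 2 ^ m := by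
      rw [hsx, show C₂ * x / 2 / C₂ = x / 2 by field_simp, div_pow]
    have hA1 : A ≤ (m.factorial : ℝ) / 2 ^ m := by
      rw [hA, hAeq, div_mul_eq_mul_div]
      exact div_le_div_of_nonneg_right (pow_mul_exp_neg_le m hxpos.le) (by positivity)
    have hA2 : s ^ 2 * A ≤ C₂ ^ 2 * ((m + 2).factorial : ℝ) / 2 ^ (m + 2) := by
      have h2 := pow_mul_exp_neg_le (m + 2) hxpos.le
      have he : s ^ 2 * A = C₂ ^ 2 / 2 ^ (m + 2) * (x ^ (m + 2) * Real.exp (-x)) := by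
        rw [hA, hAeq, hsx]; ring
      rw [he]
      calc C₂ ^ 2 / 2 ^ (m + 2) * (x ^ (m + 2) * Real.exp (-x))
          ≤ C₂ ^ 2 / 2 ^ (m + 2) * ((m + 2).factorial : ℝ) :=
            mul_le_mul_of_nonneg_left h2 (by positivity)
        _ = C₂ ^ 2 * ((m + 2).factorial : ℝ) / 2 ^ (m + 2) := by ring
    have hexp1 : Real.exp (-t / L₁) ≤ 1 := by
      rw [Real.exp_le_one_iff]
      apply div_nonpos_of_nonpos_of_nonneg (by linarith) hL₁.le
    have htL : 0 ≤ t + L₁ := by linarith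
    have step1 : Real.exp (-t / L₁) * (t + L₁) * fH₂ t
        ≤ (t + L₁) * (C₁ / 2 * (1 / (C₂ * s)) * A) := by
      have hg0 : 0 ≤ C₁ / 2 * (1 / (C₂ * s)) * A := by positivity
      calc Real.exp (-t / L₁) * (t + L₁) * fH₂ t
          ≤ 1 * (t + L₁) * (C₁ / 2 * (1 / (C₂ * s)) * A) := by
            apply mul_le_mul _ _ hf0 (by positivity)
            · exact mul_le_mul hexp1 le_rfl htL zero_le_one
            · exact hfb.trans (le_of_eq (by rw [hA]; ring))
        _ = (t + L₁) * (C₁ / 2 * (1 / (C₂ * s)) * A) := by ring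
    have step2 : (t + L₁) * (C₁ / 2 * (1 / (C₂ * s)) * A) ≤ K * s⁻¹ := by
      have e1 : (t + L₁) * (C₁ / 2 * (1 / (C₂ * s)) * A)
          = C₁ / (2 * C₂ * s) * (s ^ 2 * A + L₁ * A) := by
        rw [hts]; field_simp
      have e2 : C₁ / (2 * C₂ * s) * (C₂ ^ 2 * ((m + 2).factorial : ℝ) / 2 ^ (m + 2)
          + L₁ * ((m.factorial : ℝ) / 2 ^ m)) = K * s⁻¹ := by
        rw [hK]; field_simp; ring
      rw [e1, ← e2]
      apply mul_le_mul_of_nonneg_left _ (by positivity)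
      exact add_le_add hA2 (mul_le_mul_of_nonneg_left hA1 hL₁.le)
    rw [hrpow]
    exact step1.trans step2
  by_cases hint : IntervalIntegrable
      (fun t => Real.exp (-t / L₁) * (t + L₁) * fH₂ t) volume a b
  · have hcont : ContinuousOn (fun t : ℝ => K * t ^ (-(1/2) : ℝ)) (Set.uIcc a b) := by
      apply ContinuousOn.mul continuousOn_const
      apply ContinuousOn.rpow_const continuousOn_id
      intro y hy
      rw [Set.uIcc_of_le hab.le] at hy
      exact Or.inl (ne_of_gt (lt_of_lt_of_le ha hy.1))
    have hcint : IntervalIntegrable (fun t : ℝ => K * t ^ (-(1/2) : ℝ)) volume a b := hcont.intervalIntegrable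
    have hb12 : b ^ (-(1/2) : ℝ) * b = Real.sqrt b := by
      rw [show (b : ℝ) ^ (-(1/2) : ℝ) * b = b ^ (-(1/2) : ℝ) * b ^ (1 : ℝ) by
          rw [Real.rpow_one], ← Real.rpow_add hb, show -(1/2 : ℝ) + 1 = 1/2 by norm_num,
        ← Real.sqrt_eq_rpow]
    calc ∫ t in a..b, Real.exp (-t / L₁) * (t + L₁) * fH₂ t
        ≤ ∫ t in a..b, K * t ^ (-(1/2) : ℝ) :=
          intervalIntegral.integral_mono_on hab.le hint hcint hpt
      _ = K * ((b ^ (-(1/2) + 1 : ℝ) - a ^ (-(1/2) + 1 : ℝ)) / (-(1/2) + 1)) := by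
          rw [intervalIntegral.integral_const_mul, integral_rpow (Or.inl (by norm_num))]
      _ ≤ 2 * K * Real.sqrt b := by
          rw [show (-(1/2 : ℝ) + 1) = 1/2 by norm_num, ← Real.sqrt_eq_rpow,
            ← Real.sqrt_eq_rpow]
          have he : K * ((Real.sqrt b - Real.sqrt a) / (1/2))
              = 2 * K * Real.sqrt b - 2 * (K * Real.sqrt a) := by ring
          rw [he]
          linarith [mul_nonneg hKpos.le (Real.sqrt_nonneg a)]
      _ = ((C₁ * C₂ / 2 ^ (m + 2)) * ((m + 2).factorial : ℝ)
          + (C₁ * L₁ / (2 ^ m * C₂)) * (m.factorial : ℝ)) * Real.sqrt b := by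
          rw [hRHS]
  · rw [intervalIntegral.integral_undef hint]
    positivity
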